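/- Let f be a coloring satisfying the bmf boundary conditions and let F : [0,1]^3 → [0,1]^3 implement f. If F(x) = x, then for every color c ∈ {0,1,2,3} there is a cubelet K_{ijk} with f(i,j,k) = c whose center lies within L∞ distance 2^{-n} of x. -/

import Mathlib

/-- α = 2^{-2n} -/
noncomputable def alphaOf (n : ℕ) : ℝ := 2 ^ (-(2 * n : ℤ))

/-- The displacement vectors δ_0 = (−α,−α,−α), δ_1 = (α,0,0), δ_2 = (0,α,0), δ_3 = (0,0,α). -/
noncomputable def deltaOf (n : ℕ) (c : Fin 4) : Fin 3 → ℝ :=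
  if c = 0 then (fun _ => -alphaOf n)
  else if c = 1 then (fun m => if m = 0 then alphaOf n else 0)
  else if c = 2 then (fun m => if m = 1 then alphaOf n else 0)
  else (fun m => if m = 2 then alphaOf n else 0)

/-- Center of the cubelet K_{ijk}: the point 2^{-n}(i + 1/2, j + 1/2, k + 1/2). -/
noncomputable def cubeletCenter (n : ℕ) (i j k : Fin (2 ^ n)) : Fin 3 → ℝ :=
  fun m => (2 : ℝ) ^ (-(n : ℤ)) * (((![(i : ℕ), (j : ℕ), (k : ℕ)] m : ℕ) : ℝ) + 1 / 2)

/-- A cubelet K_{ijk} is exterior if some index equals 0 or 2^n − 1. -/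
def ExteriorCubelet (n : ℕ) (i j k : Fin (2 ^ n)) : Prop :=
  i.val = 0 ∨ j.val = 0 ∨ k.val = 0 ∨
    i.val = 2 ^ n - 1 ∨ j.val = 2 ^ n - 1 ∨ k.val = 2 ^ n - 1

/-- The bmf boundary conditions on a coloring f. -/
def BMFBoundary (n : ℕ) (f : Fin (2 ^ n) → Fin (2 ^ n) → Fin (2 ^ n) → Fin 4) : Prop :=
  ∀ i j k : Fin (2 ^ n),
    (i.val = 0 → f i j k = 1) ∧
    (j.val = 0 → 0 < i.val → f i j k = 2) ∧
    (k.val = 0 → 0 < i.val → 0 < j.val → f i j k = 3) ∧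
    (ExteriorCubelet n i j k → 0 < i.val → 0 < j.val → 0 < k.val → f i j k = 0)

/-- A continuous map F : [0,1]³ → [0,1]³ implements the coloring f :
(a) at each cubelet center, F(x) = x + δ_{f(i,j,k)};
(b) everywhere, F(x) − x lies in the convex hull of the δ-vectors of the cubelets
whose centers lie within L∞ distance 2^{-n} of x. -/
def Implements (n : ℕ) (f : Fin (2 ^ n) → Fin (2 ^ n) → Fin (2 ^ n) → Fin 4)
    (F : (Fin 3 → ℝ) → Fin 3 → ℝ) : Prop :=
  ContinuousOn F (Set.Icc 0 1) ∧
  Set.MapsTo F (Set.Icc 0 1) (Set.Icc 0 1) ∧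
  (∀ i j k : Fin (2 ^ n),
    F (cubeletCenter n i j k) = cubeletCenter n i j k + deltaOf n (f i j k)) ∧
  (∀ x ∈ Set.Icc (0 : Fin 3 → ℝ) 1,
    F x - x ∈ convexHull ℝ
      {v : Fin 3 → ℝ | ∃ i j k : Fin (2 ^ n),
        dist x (cubeletCenter n i j k) ≤ (2 : ℝ) ^ (-(n : ℤ)) ∧ v = deltaOf n (f i j k)})

/-!
At a fixpoint, 0 = F(x) − x lies in the convex hull of the displacements δ_c of the colours
present near x. Each δ_c is cut off from the other three by the weight vector w_c, which has
w_c ⬝ δ_{c'} = α for every c' ≠ c. If colour c were absent near x, the linear functional w_c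
would be at least α > 0 on the whole convex hull, which contains 0.
-/

theorem zero_notMem_convexHull_of_le_linearMap {E : Type*} [AddCommGroup E] [Module ℝ E]
    (φ : E →ₗ[ℝ] ℝ) {s : Set E} {a : ℝ} (ha : 0 < a) (hs : ∀ v ∈ s, a ≤ φ v) :
    (0 : E) ∉ convexHull ℝ s := fun h0 => by
  have hφ : a ≤ φ 0 := convexHull_min hs (convex_halfSpace_ge φ.isLinear a) h0
  rw [map_zero] at hφ
  exact hφ.not_gt ha

lemma alphaOf_pos (n : ℕ) : 0 < alphaOf n := zpow_pos two_pos _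

def colorWeight (c : Fin 4) : Fin 3 → ℝ :=
  if c = 0 then fun _ => 1
  else if c = 1 then ![-3, 1, 1]
  else if c = 2 then ![1, -3, 1]
  else ![1, 1, -3]

lemma colorWeight_dotProduct_deltaOf (n : ℕ) {c c' : Fin 4} (h : c' ≠ c) :
    colorWeight c ⬝ᵥ deltaOf n c' = alphaOf n := by
  fin_cases c <;> fin_cases c' <;>
    simp_all [colorWeight, deltaOf, dotProduct, Fin.sum_univ_three] <;> ring

theorem all_colors_near_fixpoint (n : ℕ)
    (f : Fin (2 ^ n) → Fin (2 ^ n) → Fin (2 ^ n) → Fin 4)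
    (F : (Fin 3 → ℝ) → Fin 3 → ℝ) (hF : Implements n f F)
    (x : Fin 3 → ℝ) (hx : x ∈ Set.Icc (0 : Fin 3 → ℝ) 1) (hfix : F x = x) :
    ∀ c : Fin 4, ∃ i j k : Fin (2 ^ n),
      f i j k = c ∧ dist x (cubeletCenter n i j k) ≤ (2 : ℝ) ^ (-(n : ℤ)) := by
  intro c
  by_contra! hmissing
  have hzero := hF.2.2.2 x hx
  rw [hfix, sub_self] at hzero
  refine zero_notMem_convexHull_of_le_linearMap (dotProductBilin ℝ ℝ (colorWeight c))
    (alphaOf_pos n) ?_ hzero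
  rintro _ ⟨i, j, k, hnear, rfl⟩
  have hne : f i j k ≠ c := fun hc => (hmissing i j k hc).not_ge hnear
  exact (colorWeight_dotProduct_deltaOf n hne).ge
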